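/- Let Assumptions (A1) and (A2) hold for cost functions E_1,…,E_M, let α > 0, p ≥ p_M and R > 0. Then there exists a constant C > 0 depending on R, M and p such that for all points (X_0^{m,i})_{m∈[M],i∈[N]} and (X_1^{m,i})_{m∈[M],i∈[N]} in ℝ^{M·N·d} with Euclidean norms at most R, and for every m ∈ [M], |X_α^m(ρ_0^m, M_0^{−m}) − X_α^m(ρ_1^m, M_1^{−m})| ≤ C Σ_{j=1}^M ( Σ_{i=1}^N |X_0^{j,i} − X_1^{j,i}|^p )^{1/p} ≤ C √(MN) |X_0 − X_1|, where for k ∈ {0,1}, ρ_k^m := (1/N) Σ_{i=1}^N δ_{X_k^{m,i}} and M_k^{−m} := (E[ρ_k^1],…,E[ρ_k^{m−1}],E[ρ_k^{m+1}],…,E[ρ_k^M]). -/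

import Mathlib

open MeasureTheory Finset
open scoped ENNReal NNReal

noncomputable section

/-- `ℝ^d` with the Euclidean norm. -/
abbrev Vec (d : ℕ) := EuclideanSpace ℝ (Fin d)

/-- `ℝ^{M·d}`, the space of opponents' strategies, with the Euclidean norm. -/
abbrev Opp (M d : ℕ) := EuclideanSpace ℝ (Fin M × Fin d)

/-- Euclidean norm of the concatenated vector `(x, y) ∈ ℝ^d × ℝ^{M·d}`. -/
def pairNorm {d M : ℕ} (x : Vec d) (y : Opp M d) : ℝ :=
  Real.sqrt (‖x‖ ^ 2 + ‖y‖ ^ 2)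

/-- Given strategies `Z^1, …, Z^{M+1}`, the vector `Z^{-m}` of all strategies except the
`m`-th one. -/
def oppOf {M d : ℕ} (m : Fin (M + 1)) (Z : Fin (M + 1) → Vec d) : Opp M d :=
  WithLp.toLp 2 (fun p : Fin M × Fin d => Z (m.succAbove p.1) p.2)

/-- The consensus point `X_α(ρ, Y) = (∫ x e^{-α E(x;Y)} dρ)/(∫ e^{-α E(x;Y)} dρ)`. -/
def consensus {d M : ℕ} (α : ℝ) (Em : Vec d → Opp M d → ℝ)
    (ρ : Measure (Vec d)) (Y : Opp M d) : Vec d :=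
  (∫ x, Real.exp (-α * Em x Y) ∂ρ)⁻¹ • ∫ x, Real.exp (-α * Em x Y) • x ∂ρ

/-- The mean `E[μ] = ∫ x dμ(x)` of a measure on `ℝ^d`. -/
def meanOf {d : ℕ} (μ : Measure (Vec d)) : Vec d := ∫ x, x ∂μ

/-- The empirical measure `(1/N) ∑_{i} δ_{X_i}`. -/
def empMeas {d N : ℕ} (X : Fin N → Vec d) : Measure (Vec d) :=
  (N : ℝ≥0∞)⁻¹ • ∑ i, Measure.dirac (X i)

/-- The `p`-Wasserstein distance, as an infimum over couplings. -/
def Wdist {d : ℕ} (p : ℝ) (μ ν : Measure (Vec d)) : ℝ :=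
  (sInf { e : ℝ≥0∞ | ∃ π : Measure (Vec d × Vec d), IsProbabilityMeasure π ∧
      π.map Prod.fst = μ ∧ π.map Prod.snd = ν ∧
      e = (∫⁻ z, (‖z.1 - z.2‖₊ : ℝ≥0∞) ^ p ∂π) ^ (1 / p) }).toReal

/-- Euclidean norm of a configuration `X = (X^{m,i}) ∈ ℝ^{(M+1)·N·d}`. -/
def confNorm {d M N : ℕ} (X : Fin (M + 1) → Fin N → Vec d) : ℝ :=
  Real.sqrt (∑ m, ∑ i, ‖X m i‖ ^ 2)

/-!
On an empirical measure the consensus point is the mean of the particles weighted by the Gibbs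
weights `exp (-α E_m)`. On the ball of radius `√(M+1) R` assumption (A2) traps these weights
between two positive constants, and (A1), combined with the Lipschitz bound of `exp` on a
half-line, makes them Lipschitz in the particle and in the opponents' means. A weighted mean
with weights bounded away from `0` is Lipschitz jointly in weights and points, so the consensus
point moves by at most a constant times the Euclidean distance of the configurations. Both
sides of the claim then follow by comparing that distance with the row-wise `ℓᵖ` norms.
-/

section FiniteSums

variable {ι : Type*} {p : ℝ} {a : ι → ℝ}

theorem le_rpow_sum_rpow_one_div [Fintype ι] (hp : 0 < p) (ha : ∀ i, 0 ≤ a i) (k : ι) :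
    a k ≤ (∑ i, a i ^ p) ^ (1 / p) := by
  have hpow i : 0 ≤ a i ^ p := Real.rpow_nonneg (ha i) p
  rw [one_div, Real.le_rpow_inv_iff_of_pos (ha k) (sum_nonneg fun i _ => hpow i) hp]
  exact single_le_sum (f := fun i => a i ^ p) (fun i _ => hpow i) (mem_univ k)

theorem sum_rpow_le_rpow_sum (s : Finset ι) (hp : 1 ≤ p) (ha : ∀ i, 0 ≤ a i) :
    ∑ i ∈ s, a i ^ p ≤ (∑ i ∈ s, a i) ^ p := by
  induction s using Finset.cons_induction with
  | empty => simp [Real.zero_rpow (by linarith : p ≠ 0)]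
  | cons j s hj ih =>
    rw [sum_cons, sum_cons]
    exact (add_le_add_right ih _).trans
      (Real.add_rpow_le_rpow_add (ha j) (sum_nonneg fun i _ => ha i) hp)

theorem rpow_sum_rpow_one_div_le_sum [Fintype ι] (hp : 1 ≤ p) (ha : ∀ i, 0 ≤ a i) :
    (∑ i, a i ^ p) ^ (1 / p) ≤ ∑ i, a i := by
  rw [one_div, Real.rpow_inv_le_iff_of_pos (sum_nonneg fun i _ => Real.rpow_nonneg (ha i) p)
    (sum_nonneg fun i _ => ha i) (by linarith)]
  exact sum_rpow_le_rpow_sum univ hp ha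

theorem sum_le_sqrt_card_mul_sqrt_sum_sq (s : Finset ι) (a : ι → ℝ) :
    ∑ i ∈ s, a i ≤ √(#s : ℝ) * √(∑ i ∈ s, a i ^ 2) := by
  simpa [mul_comm] using Real.sum_mul_le_sqrt_mul_sqrt s (fun _ => (1 : ℝ)) a

end FiniteSums

theorem Real.abs_exp_sub_exp_le_exp_mul {a b K : ℝ} (ha : a ≤ K) (hb : b ≤ K) :
    |Real.exp a - Real.exp b| ≤ Real.exp K * |a - b| := by
  wlog hba : b ≤ a generalizing a b
  · rw [abs_sub_comm, abs_sub_comm a]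
    exact this hb ha (le_of_not_ge hba)
  rw [abs_of_nonneg (sub_nonneg.2 (Real.exp_le_exp.2 hba)), abs_of_nonneg (sub_nonneg.2 hba)]
  calc Real.exp a - Real.exp b = Real.exp a * (1 - Real.exp (b - a)) := by
        rw [mul_sub, ← Real.exp_add, add_sub_cancel, mul_one]
    _ ≤ Real.exp a * (a - b) := by
        refine mul_le_mul_of_nonneg_left ?_ (Real.exp_nonneg a)
        linarith [Real.add_one_le_exp (b - a)]
    _ ≤ Real.exp K * (a - b) := by gcongr

section WeightedMean

variable {ι F : Type*} [Fintype ι] [NormedAddCommGroup F] [NormedSpace ℝ F]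

def weightedMean (w : ι → ℝ) (x : ι → F) : F :=
  (∑ i, w i)⁻¹ • ∑ i, w i • x i

theorem norm_sum_le_card_mul {G : Type*} [SeminormedAddCommGroup G] (g : ι → G) {C : ℝ}
    (hg : ∀ i, ‖g i‖ ≤ C) : ‖∑ i, g i‖ ≤ Fintype.card ι * C := by
  simpa using (norm_sum_le _ _).trans (sum_le_card_nsmul univ _ C fun i _ => hg i)

theorem norm_weightedMean_sub_le [Nonempty ι] {w₀ w₁ : ι → ℝ} {x₀ x₁ : ι → F}
    {a b R ε η : ℝ} (ha : 0 < a) (hw₀ : ∀ i, a ≤ w₀ i ∧ w₀ i ≤ b)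
    (hw₁ : ∀ i, a ≤ w₁ i ∧ w₁ i ≤ b) (hx₁ : ∀ i, ‖x₁ i‖ ≤ R)
    (hw : ∀ i, |w₀ i - w₁ i| ≤ η) (hx : ∀ i, ‖x₀ i - x₁ i‖ ≤ ε) :
    ‖weightedMean w₀ x₀ - weightedMean w₁ x₁‖ ≤ (b * ε + η * R) / a + η * b * R / a ^ 2 := by
  set n : ℝ := (Fintype.card ι : ℝ)
  have hn : 0 < n := by positivity
  have hη : 0 ≤ η := (abs_nonneg _).trans (hw (Classical.arbitrary ι))
  have hpos {w : ι → ℝ} (h : ∀ i, a ≤ w i ∧ w i ≤ b) i : 0 < w i := ha.trans_le (h i).1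
  have sum_ge {w : ι → ℝ} (h : ∀ i, a ≤ w i ∧ w i ≤ b) : n * a ≤ ∑ i, w i := by
    simpa using card_nsmul_le_sum univ w a fun i _ => (h i).1
  set S₀ := ∑ i, w₀ i
  set S₁ := ∑ i, w₁ i
  set T₀ := ∑ i, w₀ i • x₀ i
  set T₁ := ∑ i, w₁ i • x₁ i
  have hS₀ : n * a ≤ S₀ := sum_ge hw₀
  have hS₁ : n * a ≤ S₁ := sum_ge hw₁
  have hS₀pos : 0 < S₀ := (mul_pos hn ha).trans_le hS₀
  have hS₁pos : 0 < S₁ := (mul_pos hn ha).trans_le hS₁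
  have hb : 0 ≤ b := (hpos hw₀ (Classical.arbitrary ι)).le.trans (hw₀ _).2
  have hT : ‖T₀ - T₁‖ ≤ n * (b * ε + η * R) := by
    rw [← sum_sub_distrib]
    refine norm_sum_le_card_mul _ fun i => ?_
    rw [show w₀ i • x₀ i - w₁ i • x₁ i = w₀ i • (x₀ i - x₁ i) + (w₀ i - w₁ i) • x₁ i by
      rw [smul_sub, sub_smul]; abel]
    refine (norm_add_le _ _).trans ?_
    rw [norm_smul, norm_smul, Real.norm_eq_abs, Real.norm_eq_abs, abs_of_pos (hpos hw₀ i)]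
    exact add_le_add (mul_le_mul (hw₀ i).2 (hx i) (norm_nonneg _) hb)
      (mul_le_mul (hw i) (hx₁ i) (norm_nonneg _) hη)
  have hT₁ : ‖T₁‖ ≤ n * (b * R) := by
    refine norm_sum_le_card_mul _ fun i => ?_
    rw [norm_smul, Real.norm_eq_abs, abs_of_pos (hpos hw₁ i)]
    exact mul_le_mul (hw₁ i).2 (hx₁ i) (norm_nonneg _) hb
  have hS : |S₀ - S₁| ≤ n * η := by
    rw [← sum_sub_distrib, ← Real.norm_eq_abs]
    exact norm_sum_le_card_mul _ hw
  calc ‖S₀⁻¹ • T₀ - S₁⁻¹ • T₁‖ = ‖S₀⁻¹ • (T₀ - T₁) + ((S₁ - S₀) / (S₀ * S₁)) • T₁‖ := by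
        rw [show (S₁ - S₀) / (S₀ * S₁) = S₀⁻¹ - S₁⁻¹ by field_simp, smul_sub, sub_smul]
        abel_nf
    _ ≤ S₀⁻¹ * ‖T₀ - T₁‖ + |S₀ - S₁| / (S₀ * S₁) * ‖T₁‖ := by
        refine (norm_add_le _ _).trans_eq ?_
        rw [norm_smul, norm_smul, Real.norm_eq_abs, Real.norm_eq_abs, abs_div, abs_sub_comm,
          abs_of_pos (mul_pos hS₀pos hS₁pos), abs_of_pos (inv_pos.2 hS₀pos)]
    _ ≤ (n * a)⁻¹ * (n * (b * ε + η * R)) + n * η / ((n * a) * (n * a)) * (n * (b * R)) := by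
        gcongr
    _ = (b * ε + η * R) / a + η * b * R / a ^ 2 := by
        field_simp

theorem integral_empMeas {d N : ℕ} {F : Type*} [NormedAddCommGroup F] [NormedSpace ℝ F]
    [CompleteSpace F] (X : Fin N → Vec d) (f : Vec d → F) :
    ∫ x, f x ∂(empMeas X) = (N : ℝ)⁻¹ • ∑ i, f (X i) := by
  rw [empMeas, integral_smul_measure, integral_finsetSum_measure]
  · simp [integral_dirac, ENNReal.toReal_inv]
  · exact fun i _ => (integrable_const (f (X i))).congr (ae_eq_dirac f).symm

theorem consensus_empMeas {d N M : ℕ} (hN : 0 < N) (α : ℝ) (f : Vec d → Opp M d → ℝ)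
    (X : Fin N → Vec d) (Y : Opp M d) :
    consensus α f (empMeas X) Y = weightedMean (fun i => Real.exp (-α * f (X i) Y)) X := by
  have hN' : (N : ℝ) ≠ 0 := by positivity
  rw [consensus, integral_empMeas, integral_empMeas, weightedMean, smul_eq_mul, smul_smul]
  congr 1
  field_simp

theorem pairNorm_nonneg {d M : ℕ} (x : Vec d) (y : Opp M d) : 0 ≤ pairNorm x y :=
  Real.sqrt_nonneg _

theorem norm_le_pairNorm {d M : ℕ} (x : Vec d) (y : Opp M d) : ‖x‖ ≤ pairNorm x y :=
  Real.le_sqrt_of_sq_le (le_add_of_nonneg_right (sq_nonneg _))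

theorem neg_mul_mem_Icc_of_growth {α c G ℓ t B e : ℝ} (hα : 0 ≤ α) (hc : 0 < c) (hℓ : 0 ≤ ℓ)
    (ht : 0 ≤ t) (htB : t ≤ B) (he : (1 / c) * (t ^ ℓ - G) ≤ e ∧ e ≤ c * (t ^ ℓ + G)) :
    -α * e ∈ Set.Icc (-(α * c * (B ^ ℓ + G))) (α * G / c) := by
  have htℓ : t ^ ℓ ≤ B ^ ℓ := Real.rpow_le_rpow ht htB hℓ
  have hlow : α * (1 / c) * (t ^ ℓ - G) ≤ α * e := by
    rw [mul_assoc]; exact mul_le_mul_of_nonneg_left he.1 hα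
  have hup : α * e ≤ α * (c * (B ^ ℓ + G)) := by
    refine mul_le_mul_of_nonneg_left (he.2.trans ?_) hα
    gcongr
  constructor
  · linarith
  · have : 0 ≤ α * (1 / c) * t ^ ℓ := by positivity
    have : α * G / c = α * (1 / c) * G := by ring
    linarith

theorem exists_lipschitz_consensus_empMeas {ι : Type*} {d M : ℕ} {α : ℝ} (hα : 0 < α)
    {E : ι → Vec d → Opp M d → ℝ} {C₁ s ℓ c G : ℝ} (hC₁ : 0 ≤ C₁) (hs : 0 ≤ s)
    (hA1 : ∀ m (x₀ x₁ : Vec d) (y₀ y₁ : Opp M d), |E m x₀ y₀ - E m x₁ y₁| ≤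
      C₁ * (1 + pairNorm x₀ y₀ + pairNorm x₁ y₁) ^ s * pairNorm (x₀ - x₁) (y₀ - y₁))
    (hℓ : 0 ≤ ℓ) (hc : 0 < c)
    (hA2 : ∀ m (x : Vec d) (y : Opp M d),
      (1 / c) * (pairNorm x y ^ ℓ - G) ≤ E m x y ∧ E m x y ≤ c * (pairNorm x y ^ ℓ + G))
    {B : ℝ} (hB : 0 ≤ B) :
    ∃ L > 0, ∀ m {N : ℕ}, 0 < N → ∀ (x₀ x₁ : Fin N → Vec d) (Y₀ Y₁ : Opp M d) (δ : ℝ),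
      (∀ i, pairNorm (x₀ i) Y₀ ≤ B) → (∀ i, pairNorm (x₁ i) Y₁ ≤ B) →
      (∀ i, pairNorm (x₀ i - x₁ i) (Y₀ - Y₁) ≤ δ) →
      ‖consensus α (E m) (empMeas x₀) Y₀ - consensus α (E m) (empMeas x₁) Y₁‖ ≤ L * δ := by
  set a := Real.exp (-(α * c * (B ^ ℓ + G)))
  set b := Real.exp (α * G / c)
  set Lw := b * α * (C₁ * (1 + 2 * B) ^ s)
  refine ⟨b / a + Lw * B / a + Lw * b * B / a ^ 2, by positivity,
    fun m N hN x₀ x₁ Y₀ Y₁ δ h₀ h₁ hδ => ?_⟩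
  have hexp (x : Vec d) (Y : Opp M d) (h : pairNorm x Y ≤ B) :
      -α * E m x Y ∈ Set.Icc (-(α * c * (B ^ ℓ + G))) (α * G / c) :=
    neg_mul_mem_Icc_of_growth hα.le hc hℓ (pairNorm_nonneg x Y) h (hA2 m x Y)
  have hw (x : Vec d) (Y : Opp M d) (h : pairNorm x Y ≤ B) :
      a ≤ Real.exp (-α * E m x Y) ∧ Real.exp (-α * E m x Y) ≤ b :=
    ⟨Real.exp_le_exp.2 (hexp x Y h).1, Real.exp_le_exp.2 (hexp x Y h).2⟩
  have hΔw (i : Fin N) :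
      |Real.exp (-α * E m (x₀ i) Y₀) - Real.exp (-α * E m (x₁ i) Y₁)| ≤ Lw * δ := by
    have hbase : 1 + pairNorm (x₀ i) Y₀ + pairNorm (x₁ i) Y₁ ≤ 1 + 2 * B := by
      linarith [h₀ i, h₁ i]
    calc _ ≤ b * |-α * E m (x₀ i) Y₀ - -α * E m (x₁ i) Y₁| :=
          Real.abs_exp_sub_exp_le_exp_mul (hexp _ _ (h₀ i)).2 (hexp _ _ (h₁ i)).2
      _ = b * α * |E m (x₀ i) Y₀ - E m (x₁ i) Y₁| := by
          rw [← mul_sub, abs_mul, abs_neg, abs_of_pos hα, mul_assoc]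
      _ ≤ b * α * (C₁ * (1 + 2 * B) ^ s * δ) := by
          refine mul_le_mul_of_nonneg_left ((hA1 m _ _ _ _).trans ?_) (by positivity)
          have hnonneg : 0 ≤ 1 + pairNorm (x₀ i) Y₀ + pairNorm (x₁ i) Y₁ := by
            linarith [pairNorm_nonneg (x₀ i) Y₀, pairNorm_nonneg (x₁ i) Y₁]
          gcongr
          · exact pairNorm_nonneg _ _
          · exact hδ i
      _ = Lw * δ := by ring
  have : Nonempty (Fin N) := ⟨⟨0, hN⟩⟩
  rw [consensus_empMeas hN, consensus_empMeas hN]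
  refine (norm_weightedMean_sub_le (Real.exp_pos _) (fun i => hw _ _ (h₀ i))
    (fun i => hw _ _ (h₁ i)) (fun i => (norm_le_pairNorm _ _).trans (h₁ i)) hΔw
    (fun i => (norm_le_pairNorm _ _).trans (hδ i))).trans_eq ?_
  ring

section Configurations

variable {d M N : ℕ}

def confMean {K : ℕ} (X : Fin K → Fin N → Vec d) (j : Fin K) : Vec d :=
  (N : ℝ)⁻¹ • ∑ i, X j i

theorem confMean_sub {K : ℕ} (X₀ X₁ : Fin K → Fin N → Vec d) :
    confMean (X₀ - X₁) = confMean X₀ - confMean X₁ := by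
  funext j
  simp [confMean, smul_sub, sum_sub_distrib]

theorem oppOf_sub (m : Fin (M + 1)) (Z₀ Z₁ : Fin (M + 1) → Vec d) :
    oppOf m Z₀ - oppOf m Z₁ = oppOf m (Z₀ - Z₁) :=
  rfl

theorem norm_oppOf_sq (m : Fin (M + 1)) (Z : Fin (M + 1) → Vec d) :
    ‖oppOf m Z‖ ^ 2 = ∑ q : Fin M, ‖Z (m.succAbove q)‖ ^ 2 := by
  rw [EuclideanSpace.norm_eq, Real.sq_sqrt (by positivity), Fintype.sum_prod_type]
  refine sum_congr rfl fun q _ => ?_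
  rw [EuclideanSpace.norm_eq, Real.sq_sqrt (by positivity)]
  rfl

theorem pairNorm_oppOf_le {x : Vec d} {Z : Fin (M + 1) → Vec d} {r : ℝ} (hx : ‖x‖ ≤ r)
    (hZ : ∀ j, ‖Z j‖ ≤ r) (m : Fin (M + 1)) :
    pairNorm x (oppOf m Z) ≤ √((M : ℝ) + 1) * r := by
  have hr : 0 ≤ r := (norm_nonneg x).trans hx
  have hY : ‖oppOf m Z‖ ^ 2 ≤ M * r ^ 2 := by
    rw [norm_oppOf_sq]
    simpa using sum_le_card_nsmul univ _ (r ^ 2) fun q _ =>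
      pow_le_pow_left₀ (norm_nonneg _) (hZ (m.succAbove q)) 2
  rw [pairNorm, ← Real.sqrt_sq hr, ← Real.sqrt_mul (by positivity)]
  gcongr
  nlinarith [norm_nonneg x]

theorem confNorm_nonneg (X : Fin (M + 1) → Fin N → Vec d) : 0 ≤ confNorm X :=
  Real.sqrt_nonneg _

theorem norm_le_confNorm (X : Fin (M + 1) → Fin N → Vec d) (j : Fin (M + 1)) (i : Fin N) :
    ‖X j i‖ ≤ confNorm X := by
  rw [confNorm, ← Real.sqrt_sq (norm_nonneg (X j i))]
  gcongr
  exact (single_le_sum (f := fun i => ‖X j i‖ ^ 2) (fun _ _ => by positivity) (mem_univ i)).trans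
    (single_le_sum (f := fun j => ∑ i, ‖X j i‖ ^ 2) (fun _ _ => by positivity) (mem_univ j))

theorem norm_confMean_le_confNorm (X : Fin (M + 1) → Fin N → Vec d) (j : Fin (M + 1)) :
    ‖confMean X j‖ ≤ confNorm X := by
  rw [confMean, norm_smul, norm_inv, Real.norm_natCast]
  calc (N : ℝ)⁻¹ * ‖∑ i, X j i‖ ≤ (N : ℝ)⁻¹ * (N * confNorm X) := by
        gcongr
        simpa using norm_sum_le_card_mul _ (norm_le_confNorm X j)
    _ ≤ confNorm X := by
        rw [← mul_assoc]
        refine mul_le_of_le_one_left (confNorm_nonneg X) ?_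
        rcases N.eq_zero_or_pos with rfl | hN
        · simp
        · rw [inv_mul_cancel₀ (by positivity)]

theorem pairNorm_oppOf_confMean_le (X : Fin (M + 1) → Fin N → Vec d) (m : Fin (M + 1))
    (i : Fin N) : pairNorm (X m i) (oppOf m (confMean X)) ≤ √((M : ℝ) + 1) * confNorm X :=
  pairNorm_oppOf_le (norm_le_confNorm X m i) (norm_confMean_le_confNorm X) m

theorem confNorm_le_sqrt_mul_sum_rpow {p : ℝ} (hp : 0 < p) (X : Fin (M + 1) → Fin N → Vec d) :
    confNorm X ≤ √(N : ℝ) * ∑ j, (∑ i, ‖X j i‖ ^ p) ^ (1 / p) := by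
  set S := fun j => (∑ i, ‖X j i‖ ^ p) ^ (1 / p)
  have hS j i : ‖X j i‖ ≤ S j := le_rpow_sum_rpow_one_div hp (fun i => norm_nonneg _) i
  have hS0 j : 0 ≤ S j := Real.rpow_nonneg (sum_nonneg fun i _ => by positivity) _
  calc confNorm X ≤ √(∑ j, N * S j ^ 2) := by
        refine Real.sqrt_le_sqrt (sum_le_sum fun j _ => ?_)
        simpa using sum_le_card_nsmul univ _ (S j ^ 2) fun i _ =>
          pow_le_pow_left₀ (norm_nonneg _) (hS j i) 2
    _ = √(N : ℝ) * √(∑ j, S j ^ 2) := by rw [← mul_sum, Real.sqrt_mul (Nat.cast_nonneg _)]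
    _ ≤ √(N : ℝ) * ∑ j, S j := by
        gcongr
        exact Real.sqrt_le_iff.2 ⟨sum_nonneg fun j _ => hS0 j,
          sum_sq_le_sq_sum_of_nonneg fun j _ => hS0 j⟩

theorem sum_rpow_le_sqrt_mul_confNorm {p : ℝ} (hp : 1 ≤ p) (X : Fin (M + 1) → Fin N → Vec d) :
    ∑ j, (∑ i, ‖X j i‖ ^ p) ^ (1 / p) ≤ √(((M : ℝ) + 1) * N) * confNorm X :=
  calc ∑ j, (∑ i, ‖X j i‖ ^ p) ^ (1 / p) ≤ ∑ j, ∑ i, ‖X j i‖ :=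
        sum_le_sum fun j _ => rpow_sum_rpow_one_div_le_sum hp fun i => norm_nonneg _
    _ = ∑ q : Fin (M + 1) × Fin N, ‖X q.1 q.2‖ := (Fintype.sum_prod_type' _).symm
    _ ≤ √(#(univ : Finset (Fin (M + 1) × Fin N)) : ℝ) *
          √(∑ q : Fin (M + 1) × Fin N, ‖X q.1 q.2‖ ^ 2) :=
        sum_le_sqrt_card_mul_sqrt_sum_sq _ _
    _ = √(((M : ℝ) + 1) * N) * confNorm X := by
        simp [confNorm, Fintype.sum_prod_type]

end Configurations

theorem stmt16_general {d N M : ℕ} (hN : 0 < N)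
    (α : ℝ) (hα : 0 < α)
    (E : Fin (M + 1) → Vec d → Opp M d → ℝ)
    -- Assumption (A1)
    (C₁ s : ℝ) (hC₁ : 0 < C₁) (hs : 0 ≤ s)
    (hA1 : ∀ (m : Fin (M + 1)) (x₀ x₁ : Vec d) (y₀ y₁ : Opp M d),
      |E m x₀ y₀ - E m x₁ y₁| ≤
        C₁ * (1 + pairNorm x₀ y₀ + pairNorm x₁ y₁) ^ s * pairNorm (x₀ - x₁) (y₀ - y₁))
    -- Assumption (A2)
    (ℓ c G : ℝ) (hℓ : 0 ≤ ℓ) (hc : 0 < c)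
    (hA2 : ∀ (m : Fin (M + 1)) (x : Vec d) (y : Opp M d),
      (1 / c) * (pairNorm x y ^ ℓ - G) ≤ E m x y ∧ E m x y ≤ c * (pairNorm x y ^ ℓ + G))
    (p R : ℝ) (hp : (if ℓ = 0 then 2 + s else 1) ≤ p) (hR : 0 < R) :
    ∃ C > (0 : ℝ), ∀ (X₀ X₁ : Fin (M + 1) → Fin N → Vec d),
      confNorm X₀ ≤ R → confNorm X₁ ≤ R →
      ∀ m : Fin (M + 1),
        ‖consensus α (E m) (empMeas (X₀ m)) (oppOf m fun j => (N : ℝ)⁻¹ • ∑ i, X₀ j i) -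
            consensus α (E m) (empMeas (X₁ m)) (oppOf m fun j => (N : ℝ)⁻¹ • ∑ i, X₁ j i)‖
          ≤ C * ∑ j, (∑ i, ‖X₀ j i - X₁ j i‖ ^ p) ^ (1 / p) ∧
        C * ∑ j, (∑ i, ‖X₀ j i - X₁ j i‖ ^ p) ^ (1 / p)
          ≤ C * Real.sqrt (((M : ℝ) + 1) * N) * confNorm (X₀ - X₁) := by
  have hp1 : 1 ≤ p := le_trans (by split_ifs <;> linarith) hp
  obtain ⟨L, hL, hlip⟩ := exists_lipschitz_consensus_empMeas hα hC₁.le hs hA1 hℓ hc hA2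
    (B := √((M : ℝ) + 1) * R) (by positivity)
  refine ⟨L * √((M : ℝ) + 1) * √(N : ℝ), by positivity, fun X₀ X₁ h₀ h₁ m => ⟨?_, ?_⟩⟩
  · have hball (X : Fin (M + 1) → Fin N → Vec d) (hX : confNorm X ≤ R) (i : Fin N) :
        pairNorm (X m i) (oppOf m (confMean X)) ≤ √((M : ℝ) + 1) * R :=
      (pairNorm_oppOf_confMean_le X m i).trans (by gcongr)
    calc _ ≤ L * (√((M : ℝ) + 1) * confNorm (X₀ - X₁)) :=
          hlip m hN (X₀ m) (X₁ m) _ _ _ (hball X₀ h₀) (hball X₁ h₁) fun i => by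
            rw [oppOf_sub, ← confMean_sub]
            exact pairNorm_oppOf_confMean_le (X₀ - X₁) m i
      _ ≤ L * (√((M : ℝ) + 1) * (√(N : ℝ) * ∑ j, (∑ i, ‖X₀ j i - X₁ j i‖ ^ p) ^ (1 / p))) := by
          gcongr
          exact confNorm_le_sqrt_mul_sum_rpow (by linarith) (X₀ - X₁)
      _ = _ := by ring
  · rw [mul_assoc _ √(((M : ℝ) + 1) * N)]
    exact mul_le_mul_of_nonneg_left (sum_rpow_le_sqrt_mul_confNorm hp1 (X₀ - X₁))
      (by positivity)

/-- local Lipschitz property of the consensus points of the empirical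
measures, with an explicit Wasserstein-type intermediate bound. -/
theorem stmt16 {d N M : ℕ} (hd : 0 < d) (hN : 0 < N)
    (α : ℝ) (hα : 0 < α)
    (E : Fin (M + 1) → Vec d → Opp M d → ℝ)
    (hE : ∀ m, Measurable (Function.uncurry (E m)))
    -- Assumption (A1)
    (C₁ s : ℝ) (hC₁ : 0 < C₁) (hs : 0 ≤ s)
    (hA1 : ∀ (m : Fin (M + 1)) (x₀ x₁ : Vec d) (y₀ y₁ : Opp M d),
      |E m x₀ y₀ - E m x₁ y₁| ≤
        C₁ * (1 + pairNorm x₀ y₀ + pairNorm x₁ y₁) ^ s * pairNorm (x₀ - x₁) (y₀ - y₁))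
    -- Assumption (A2)
    (ℓ c G : ℝ) (hℓ : 0 ≤ ℓ) (hc : 0 < c) (hG : 0 < G)
    (hA2 : ∀ (m : Fin (M + 1)) (x : Vec d) (y : Opp M d),
      (1 / c) * (pairNorm x y ^ ℓ - G) ≤ E m x y ∧ E m x y ≤ c * (pairNorm x y ^ ℓ + G))
    (p R : ℝ) (hp : (if ℓ = 0 then 2 + s else 1) ≤ p) (hR : 0 < R) :
    ∃ C > (0 : ℝ), ∀ (X₀ X₁ : Fin (M + 1) → Fin N → Vec d),
      confNorm X₀ ≤ R → confNorm X₁ ≤ R →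
      ∀ m : Fin (M + 1),
        ‖consensus α (E m) (empMeas (X₀ m)) (oppOf m fun j => (N : ℝ)⁻¹ • ∑ i, X₀ j i) -
            consensus α (E m) (empMeas (X₁ m)) (oppOf m fun j => (N : ℝ)⁻¹ • ∑ i, X₁ j i)‖
          ≤ C * ∑ j, (∑ i, ‖X₀ j i - X₁ j i‖ ^ p) ^ (1 / p) ∧
        C * ∑ j, (∑ i, ‖X₀ j i - X₁ j i‖ ^ p) ^ (1 / p)
          ≤ C * Real.sqrt (((M : ℝ) + 1) * N) * confNorm (X₀ - X₁) :=
  stmt16_general hN α hα E C₁ s hC₁ hs hA1 ℓ c G hℓ hc hA2 p R hp hR
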